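/- arXiv:1609.04774 — 2 statements merged into one kernel-verified Lean document; each statement's English description precedes it below -/
import Mathlib

section
/- If f : [a,b] → ℝ is convex and g : [a,b] → ℝ is non-negative, integrable, and symmetric about (a+b)/2 (i.e. g(x) = g(a+b-x) for all x ∈ [a,b]), then f((a+b)/2) ∫_a^b g(x) dx ≤ ∫_a^b f(x) g(x) dx ≤ ((f(a)+f(b))/2) ∫_a^b g(x) dx. -/
open MeasureTheory intervalIntegral

/-!
Pair each point `x` of `[a, b]` with its mirror image `a + b - x`. Convexity gives
`2 f((a+b)/2) ≤ f x + f (a + b - x) ≤ f a + f b`, and since `g` is symmetric the reflection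
`x ↦ a + b - x` does not change `∫ f g`, so `2 ∫ f g = ∫ (f x + f (a + b - x)) g x`.
Multiplying the pointwise bounds by `g ≥ 0` and integrating gives both inequalities.
-/

open Set

theorem ConvexOn.map_add_map_swap_le {𝕜 E β : Type*} [Semiring 𝕜] [PartialOrder 𝕜]
    [AddCommMonoid E] [AddCommMonoid β] [PartialOrder β] [IsOrderedAddMonoid β] [SMul 𝕜 E]
    [Module 𝕜 β] {s : Set E} {f : E → β} (hf : ConvexOn 𝕜 s f) {x y : E} (hx : x ∈ s)
    (hy : y ∈ s) {t u : 𝕜} (ht : 0 ≤ t) (hu : 0 ≤ u) (htu : t + u = 1) :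
    f (t • x + u • y) + f (u • x + t • y) ≤ f x + f y :=
  calc f (t • x + u • y) + f (u • x + t • y)
      ≤ (t • f x + u • f y) + (u • f x + t • f y) :=
        add_le_add (hf.2 hx hy ht hu htu) (hf.2 hx hy hu ht (by rwa [add_comm]))
    _ = f x + f y := by
        rw [add_add_add_comm, ← add_smul, add_comm (u • f y), ← add_smul, htu, one_smul,
          one_smul]

theorem ConvexOn.map_add_div_two_le {s : Set ℝ} {f : ℝ → ℝ} (hf : ConvexOn ℝ s f)
    {x y : ℝ} (hx : x ∈ s) (hy : y ∈ s) : f ((x + y) / 2) ≤ (f x + f y) / 2 := by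
  have h := hf.2 hx hy (by norm_num : (0 : ℝ) ≤ 1 / 2) (by norm_num : (0 : ℝ) ≤ 1 / 2)
    (by norm_num)
  have hmid : (1 / 2 : ℝ) • x + (1 / 2 : ℝ) • y = (x + y) / 2 := by
    simp only [smul_eq_mul]; ring
  rw [hmid, smul_eq_mul, smul_eq_mul] at h
  linarith

section Reflection

variable {a b x : ℝ}

theorem add_sub_mem_Icc (hx : x ∈ Icc a b) : a + b - x ∈ Icc a b :=
  ⟨by linarith [hx.2], by linarith [hx.1]⟩

theorem ConvexOn.two_mul_map_add_div_two_le_of_mem_Icc {f : ℝ → ℝ}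
    (hf : ConvexOn ℝ (Icc a b) f) (hx : x ∈ Icc a b) :
    2 * f ((a + b) / 2) ≤ f x + f (a + b - x) := by
  have := hf.map_add_div_two_le hx (add_sub_mem_Icc hx)
  rw [add_sub_cancel] at this
  linarith

theorem ConvexOn.map_add_map_add_sub_le_of_mem_Icc {f : ℝ → ℝ} (hf : ConvexOn ℝ (Icc a b) f)
    (hx : x ∈ Icc a b) : f x + f (a + b - x) ≤ f a + f b := by
  have hab : a ≤ b := hx.1.trans hx.2
  obtain ⟨t, u, ht, hu, htu, rfl⟩ := Icc_subset_segment hx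
  have hreflect : a + b - (t • a + u • b) = u • a + t • b := by
    simp only [smul_eq_mul]
    linear_combination -(a + b) * htu
  rw [hreflect]
  exact hf.map_add_map_swap_le (left_mem_Icc.2 hab) (right_mem_Icc.2 hab) ht hu htu

end Reflection

section WeightedBounds

variable {a b m M : ℝ} {φ g : ℝ → ℝ}

theorem const_mul_integral_le_integral_mul (hab : a ≤ b) (hg : ∀ x ∈ Icc a b, 0 ≤ g x)
    (hg_int : IntervalIntegrable g volume a b)
    (hφg : IntervalIntegrable (fun x => φ x * g x) volume a b)
    (hm : ∀ x ∈ Icc a b, m ≤ φ x) :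
    m * ∫ x in a..b, g x ≤ ∫ x in a..b, φ x * g x := by
  rw [← intervalIntegral.integral_const_mul]
  exact integral_mono_on hab (hg_int.const_mul m) hφg fun x hx =>
    mul_le_mul_of_nonneg_right (hm x hx) (hg x hx)

theorem integral_mul_le_const_mul_integral (hab : a ≤ b) (hg : ∀ x ∈ Icc a b, 0 ≤ g x)
    (hg_int : IntervalIntegrable g volume a b)
    (hφg : IntervalIntegrable (fun x => φ x * g x) volume a b)
    (hM : ∀ x ∈ Icc a b, φ x ≤ M) :
    ∫ x in a..b, φ x * g x ≤ M * ∫ x in a..b, g x := by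
  rw [← intervalIntegral.integral_const_mul]
  exact integral_mono_on hab hφg (hg_int.const_mul M) fun x hx =>
    mul_le_mul_of_nonneg_right (hM x hx) (hg x hx)

end WeightedBounds

section SymmetricWeight

variable {E : Type*} [NormedAddCommGroup E] {a b : ℝ}

theorem intervalIntegral.integral_comp_add_sub [NormedSpace ℝ E] (h : ℝ → E) :
    ∫ x in a..b, h (a + b - x) = ∫ x in a..b, h x := by
  simp [integral_comp_sub_left]

theorem IntervalIntegrable.comp_add_sub {h : ℝ → E} (hh : IntervalIntegrable h volume a b) :
    IntervalIntegrable (fun x => h (a + b - x)) volume a b := by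
  simpa using (hh.comp_sub_left (a + b)).symm

variable {f g : ℝ → ℝ} (hab : a ≤ b) (hg : ∀ x ∈ Icc a b, g x = g (a + b - x))
include hab hg

theorem eqOn_comp_add_sub_mul_of_symm :
    EqOn (fun x => f (a + b - x) * g x) (fun x => f (a + b - x) * g (a + b - x)) (uIcc a b) := by
  intro x hx
  rw [uIcc_of_le hab] at hx
  simp only [← hg x hx]

theorem integral_comp_add_sub_mul_of_symm :
    ∫ x in a..b, f (a + b - x) * g x = ∫ x in a..b, f x * g x :=
  (integral_congr (eqOn_comp_add_sub_mul_of_symm hab hg)).trans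
    (integral_comp_add_sub fun x => f x * g x)

theorem IntervalIntegrable.comp_add_sub_mul_of_symm
    (hfg : IntervalIntegrable (fun x => f x * g x) volume a b) :
    IntervalIntegrable (fun x => f (a + b - x) * g x) volume a b :=
  (intervalIntegrable_congr ((eqOn_comp_add_sub_mul_of_symm hab hg).mono uIoc_subset_uIcc)).2
    hfg.comp_add_sub

theorem integral_add_comp_add_sub_mul_of_symm
    (hfg : IntervalIntegrable (fun x => f x * g x) volume a b) :
    ∫ x in a..b, (f x + f (a + b - x)) * g x = 2 * ∫ x in a..b, f x * g x := by
  simp_rw [add_mul]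
  rw [integral_add hfg (hfg.comp_add_sub_mul_of_symm hab hg),
    integral_comp_add_sub_mul_of_symm hab hg, two_mul]

end SymmetricWeight

theorem hermite_hadamard_fejer (a b : ℝ) (hab : a < b) (f g : ℝ → ℝ)
    (hconv : ConvexOn ℝ (Set.Icc a b) f)
    (hg_nonneg : ∀ x ∈ Set.Icc a b, 0 ≤ g x)
    (hg_int : IntervalIntegrable g volume a b)
    (hg_symm : ∀ x ∈ Set.Icc a b, g x = g (a + b - x))
    (hfg_int : IntervalIntegrable (fun x => f x * g x) volume a b) :
    f ((a + b) / 2) * ∫ x in a..b, g x ≤ ∫ x in a..b, f x * g x ∧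
      (∫ x in a..b, f x * g x) ≤ ((f a + f b) / 2) * ∫ x in a..b, g x := by
  have hsum_int : IntervalIntegrable (fun x => (f x + f (a + b - x)) * g x) volume a b := by
    simpa only [add_mul] using hfg_int.add (hfg_int.comp_add_sub_mul_of_symm hab.le hg_symm)
  have lower := const_mul_integral_le_integral_mul hab.le hg_nonneg hg_int hsum_int
    fun x hx => hconv.two_mul_map_add_div_two_le_of_mem_Icc hx
  have upper := integral_mul_le_const_mul_integral hab.le hg_nonneg hg_int hsum_int
    fun x hx => hconv.map_add_map_add_sub_le_of_mem_Icc hx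
  rw [integral_add_comp_add_sub_mul_of_symm hab.le hg_symm hfg_int] at lower upper
  constructor <;> linarith
end

section
/- Let 0 < a < b, α > 0, ρ > 0, and let f : [a,b] → ℝ be convex and integrable. Define F(x) = f(x) + f(a+b−x). Then F((a+b)/2) ≤ (ρ^α Γ(α+1)/(2(b^ρ − a^ρ)^α)) [^ρI^α_{a+}F(b) + ^ρI^α_{b-}F(a)] ≤ (F(a)+F(b))/2. -/
/-! For `x ∈ [a, b]`, convexity of `f` gives `F ((a + b) / 2) ≤ F x ≤ (F a + F b) / 2`.
Both Katugampola kernels are nonnegative on `[a, b]`, being the derivatives of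
`-(b ^ ρ - t ^ ρ) ^ α / (ρ α)` and `(t ^ ρ - a ^ ρ) ^ α / (ρ α)`, so each has total mass
`(b ^ ρ - a ^ ρ) ^ α / (ρ α)`. The prefactor of the theorem is exactly the one turning the sum of
the two weighted integrals into an average of `F`, and the pointwise bounds on `F` pass to it. -/

open MeasureTheory intervalIntegral Real Set

lemma ConvexOn.sub_mul_le_secant {f : ℝ → ℝ} {a b x : ℝ} (hf : ConvexOn ℝ (Icc a b) f) (hab : a < b)
    (hx : x ∈ Icc a b) : (b - a) * f x ≤ (b - x) * f a + (x - a) * f b := by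
  have hba : 0 < b - a := sub_pos.mpr hab
  have h := hf.2 (left_mem_Icc.mpr hab.le) (right_mem_Icc.mpr hab.le)
    (div_nonneg (sub_nonneg.mpr hx.2) hba.le) (div_nonneg (sub_nonneg.mpr hx.1) hba.le)
    (by field_simp; ring)
  have hcomb : ((b - x) / (b - a)) • a + ((x - a) / (b - a)) • b = x := by
    simp only [smul_eq_mul]; field_simp; ring
  rw [hcomb, smul_eq_mul, smul_eq_mul] at h
  calc (b - a) * f x ≤ (b - a) * ((b - x) / (b - a) * f a + (x - a) / (b - a) * f b) :=
        mul_le_mul_of_nonneg_left h hba.le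
    _ = (b - x) * f a + (x - a) * f b := by field_simp

lemma ConvexOn.add_map_reflect_le {f : ℝ → ℝ} {a b x : ℝ} (hf : ConvexOn ℝ (Icc a b) f)
    (hab : a < b) (hx : x ∈ Icc a b) : f x + f (a + b - x) ≤ f a + f b := by
  have hx' : a + b - x ∈ Icc a b := ⟨by linarith [hx.2], by linarith [hx.1]⟩
  have h₁ := hf.sub_mul_le_secant hab hx
  have h₂ := hf.sub_mul_le_secant hab hx'
  refine le_of_mul_le_mul_left ?_ (sub_pos.mpr hab)
  linear_combination h₁ + h₂

lemma ConvexOn.two_mul_map_midpoint_le {f : ℝ → ℝ} {a b x : ℝ} (hf : ConvexOn ℝ (Icc a b) f)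
    (hx : x ∈ Icc a b) : 2 * f ((a + b) / 2) ≤ f x + f (a + b - x) := by
  have hx' : a + b - x ∈ Icc a b := ⟨by linarith [hx.2], by linarith [hx.1]⟩
  have h := hf.2 hx hx' (by norm_num : (0 : ℝ) ≤ 1 / 2) (by norm_num : (0 : ℝ) ≤ 1 / 2)
    (by norm_num)
  have hmid : (1 / 2 : ℝ) • x + (1 / 2 : ℝ) • (a + b - x) = (a + b) / 2 := by
    simp only [smul_eq_mul]; ring
  rw [hmid, smul_eq_mul, smul_eq_mul] at h
  linarith

lemma IntervalIntegrable.add_comp_reflect {f : ℝ → ℝ} {a b : ℝ}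
    (hf : IntervalIntegrable f volume a b) :
    IntervalIntegrable (fun x => f x + f (a + b - x)) volume a b := by
  have hreflect := hf.comp_sub_left (a + b)
  rw [add_sub_cancel_left, add_sub_cancel_right] at hreflect
  exact hf.add hreflect.symm

lemma intervalIntegrable_and_integral_eq_of_hasDerivAt_of_nonneg {g g' : ℝ → ℝ} {a b : ℝ}
    (hab : a ≤ b) (hcont : ContinuousOn g (Icc a b))
    (hderiv : ∀ x ∈ Ioo a b, HasDerivAt g (g' x) x) (hpos : ∀ x ∈ Ioo a b, 0 ≤ g' x) :
    IntervalIntegrable g' volume a b ∧ ∫ x in a..b, g' x = g b - g a := by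
  have hint : IntervalIntegrable g' volume a b :=
    (intervalIntegrable_iff_integrableOn_Ioc_of_le hab).mpr
      (integrableOn_deriv_of_nonneg hcont hderiv hpos)
  exact ⟨hint, integral_eq_sub_of_hasDerivAt_of_le hab hcont hderiv hint⟩

lemma intervalIntegrable_mul_of_mem_Icc {a b m M : ℝ} {w F : ℝ → ℝ} (hab : a ≤ b)
    (hw : IntervalIntegrable w volume a b)
    (hF : AEStronglyMeasurable F (volume.restrict (Ioc a b)))
    (hFm : ∀ t ∈ Icc a b, F t ∈ Icc m M) :
    IntervalIntegrable (fun t => w t * F t) volume a b := by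
  rw [intervalIntegrable_iff_integrableOn_Ioc_of_le hab] at hw ⊢
  refine hw.mul_bdd hF (c := max |m| |M|) ((ae_restrict_iff' measurableSet_Ioc).mpr ?_)
  filter_upwards with t ht
  have ht' := hFm t (Ioc_subset_Icc_self ht)
  exact abs_le_max_abs_abs ht'.1 ht'.2

lemma integral_mul_mem_Icc {a b m M : ℝ} {w F : ℝ → ℝ} (hab : a ≤ b)
    (hw : IntervalIntegrable w volume a b) (hw₀ : ∀ t ∈ Icc a b, 0 ≤ w t)
    (hF : AEStronglyMeasurable F (volume.restrict (Ioc a b)))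
    (hFm : ∀ t ∈ Icc a b, F t ∈ Icc m M) :
    ∫ t in a..b, w t * F t ∈ Icc ((∫ t in a..b, w t) * m) ((∫ t in a..b, w t) * M) := by
  have hwF := intervalIntegrable_mul_of_mem_Icc hab hw hF hFm
  rw [← intervalIntegral.integral_mul_const, ← intervalIntegral.integral_mul_const]
  exact ⟨integral_mono_on hab (hw.mul_const m) hwF
      fun t ht => mul_le_mul_of_nonneg_left (hFm t ht).1 (hw₀ t ht),
    integral_mono_on hab hwF (hw.mul_const M)
      fun t ht => mul_le_mul_of_nonneg_left (hFm t ht).2 (hw₀ t ht)⟩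

lemma katugampola_left_kernel_integral {a b ρ α : ℝ} (ha : 0 ≤ a) (hab : a ≤ b) (hρ : 0 < ρ)
    (hα : 0 < α) :
    (∀ t ∈ Icc a b, 0 ≤ t ^ (ρ - 1) * (b ^ ρ - t ^ ρ) ^ (α - 1)) ∧
      IntervalIntegrable (fun t => t ^ (ρ - 1) * (b ^ ρ - t ^ ρ) ^ (α - 1)) volume a b ∧
      ∫ t in a..b, t ^ (ρ - 1) * (b ^ ρ - t ^ ρ) ^ (α - 1) = (b ^ ρ - a ^ ρ) ^ α / (ρ * α) := by
  have hK₀ : ∀ t ∈ Icc a b, 0 ≤ t ^ (ρ - 1) * (b ^ ρ - t ^ ρ) ^ (α - 1) := fun t ht => by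
    have := ha.trans ht.1
    have := rpow_le_rpow this ht.2 hρ.le
    positivity
  refine ⟨hK₀, (intervalIntegrable_and_integral_eq_of_hasDerivAt_of_nonneg
    (g := fun t => -(b ^ ρ - t ^ ρ) ^ α / (ρ * α)) hab ?_ ?_
    fun t ht => hK₀ t (Ioo_subset_Icc_self ht)).imp_right (·.trans ?_)⟩
  · fun_prop (disch := positivity)
  · intro t ht
    have ht₀ : 0 < t := ha.trans_lt ht.1
    have hpos : 0 < b ^ ρ - t ^ ρ := sub_pos.mpr (rpow_lt_rpow ht₀.le ht.2 hρ)
    refine (((hasDerivAt_rpow_const (Or.inl ht₀.ne')).const_sub (b ^ ρ)).rpow_const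
      (Or.inl hpos.ne')).neg.div_const (ρ * α) |>.congr_deriv ?_
    field_simp
  · simp only [sub_self, zero_rpow hα.ne', neg_zero, zero_div, zero_sub]
    field_simp

lemma katugampola_right_kernel_integral {a b ρ α : ℝ} (ha : 0 ≤ a) (hab : a ≤ b) (hρ : 0 < ρ)
    (hα : 0 < α) :
    (∀ t ∈ Icc a b, 0 ≤ t ^ (ρ - 1) * (t ^ ρ - a ^ ρ) ^ (α - 1)) ∧
      IntervalIntegrable (fun t => t ^ (ρ - 1) * (t ^ ρ - a ^ ρ) ^ (α - 1)) volume a b ∧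
      ∫ t in a..b, t ^ (ρ - 1) * (t ^ ρ - a ^ ρ) ^ (α - 1) = (b ^ ρ - a ^ ρ) ^ α / (ρ * α) := by
  have hK₀ : ∀ t ∈ Icc a b, 0 ≤ t ^ (ρ - 1) * (t ^ ρ - a ^ ρ) ^ (α - 1) := fun t ht => by
    have := ha.trans ht.1
    have := rpow_le_rpow ha ht.1 hρ.le
    positivity
  refine ⟨hK₀, (intervalIntegrable_and_integral_eq_of_hasDerivAt_of_nonneg
    (g := fun t => (t ^ ρ - a ^ ρ) ^ α / (ρ * α)) hab ?_ ?_
    fun t ht => hK₀ t (Ioo_subset_Icc_self ht)).imp_right (·.trans ?_)⟩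
  · fun_prop (disch := positivity)
  · intro t ht
    have ht₀ : 0 < t := ha.trans_lt ht.1
    have hpos : 0 < t ^ ρ - a ^ ρ := sub_pos.mpr (rpow_lt_rpow ha ht.1 hρ)
    refine (((hasDerivAt_rpow_const (Or.inl ht₀.ne')).sub_const (a ^ ρ)).rpow_const
      (Or.inl hpos.ne')).div_const (ρ * α) |>.congr_deriv ?_
    field_simp
  · simp only [sub_self, zero_rpow hα.ne', zero_div, sub_zero]

lemma katugampola_normalization {α ρ P : ℝ} (hα : 0 < α) (hρ : 0 < ρ) (hP : 0 < P) :
    ρ ^ α * Gamma (α + 1) / (2 * P ^ α) * (ρ ^ (1 - α) / Gamma α) * (P ^ α / (ρ * α)) =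
      1 / 2 := by
  have hρρ : ρ ^ α * ρ ^ (1 - α) = ρ := by rw [← rpow_add hρ]; simp
  have hΓ : Gamma α ≠ 0 := (Gamma_pos_of_pos hα).ne'
  have hPα : P ^ α ≠ 0 := (rpow_pos_of_pos hP α).ne'
  rw [Gamma_add_one hα.ne']
  field_simp
  linear_combination hρρ

theorem katugampola_hh_F (a b α ρ : ℝ) (ha : 0 < a) (hab : a < b)
    (hα : 0 < α) (hρ : 0 < ρ) (f F : ℝ → ℝ)
    (hconv : ConvexOn ℝ (Set.Icc a b) f)
    (hint : IntervalIntegrable f volume a b)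
    (hF : ∀ x, F x = f x + f (a + b - x)) :
    F ((a + b) / 2) ≤
      (ρ ^ α * Real.Gamma (α + 1) / (2 * (b ^ ρ - a ^ ρ) ^ α)) *
        ((ρ ^ (1 - α) / Real.Gamma α) *
            (∫ t in a..b, t ^ (ρ - 1) * (b ^ ρ - t ^ ρ) ^ (α - 1) * F t) +
         (ρ ^ (1 - α) / Real.Gamma α) *
            (∫ t in a..b, t ^ (ρ - 1) * (t ^ ρ - a ^ ρ) ^ (α - 1) * F t)) ∧
    (ρ ^ α * Real.Gamma (α + 1) / (2 * (b ^ ρ - a ^ ρ) ^ α)) *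
        ((ρ ^ (1 - α) / Real.Gamma α) *
            (∫ t in a..b, t ^ (ρ - 1) * (b ^ ρ - t ^ ρ) ^ (α - 1) * F t) +
         (ρ ^ (1 - α) / Real.Gamma α) *
            (∫ t in a..b, t ^ (ρ - 1) * (t ^ ρ - a ^ ρ) ^ (α - 1) * F t)) ≤
      (F a + F b) / 2 := by
  have hFm : ∀ t ∈ Icc a b, F t ∈ Icc (F ((a + b) / 2)) ((F a + F b) / 2) := by
    intro t ht
    have hmid := hconv.two_mul_map_midpoint_le ht
    have hend := hconv.add_map_reflect_le hab ht
    have hmid_reflect : a + b - (a + b) / 2 = (a + b) / 2 := by ring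
    simp only [hF, add_sub_cancel_left, add_sub_cancel_right, hmid_reflect] at hmid hend ⊢
    constructor <;> linarith
  have hFint : IntervalIntegrable F volume a b := by
    simpa only [← hF] using hint.add_comp_reflect
  have hFmeas := hFint.1.aestronglyMeasurable
  obtain ⟨hK₁₀, hK₁, hK₁int⟩ := katugampola_left_kernel_integral ha.le hab.le hρ hα
  obtain ⟨hK₂₀, hK₂, hK₂int⟩ := katugampola_right_kernel_integral ha.le hab.le hρ hα
  have h₁ := integral_mul_mem_Icc hab.le hK₁ hK₁₀ hFmeas hFm
  have h₂ := integral_mul_mem_Icc hab.le hK₂ hK₂₀ hFmeas hFm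
  rw [hK₁int] at h₁
  rw [hK₂int] at h₂
  have hP : 0 < b ^ ρ - a ^ ρ := sub_pos.mpr (rpow_lt_rpow ha.le hab hρ)
  have hc := katugampola_normalization hα hρ hP
  have hc₀ : 0 ≤ ρ ^ α * Gamma (α + 1) / (2 * (b ^ ρ - a ^ ρ) ^ α) * (ρ ^ (1 - α) / Gamma α) := by
    positivity
  constructor
  · linear_combination mul_le_mul_of_nonneg_left h₁.1 hc₀ + mul_le_mul_of_nonneg_left h₂.1 hc₀ -
      2 * F ((a + b) / 2) * hc
  · linear_combination mul_le_mul_of_nonneg_left h₁.2 hc₀ + mul_le_mul_of_nonneg_left h₂.2 hc₀ +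
      (F a + F b) * hc
end
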